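/- Let X ~ N(μ, σ²) with σ > 0, let Y = max(0, X), set μ̃ = E[Y] and σ̃² = Var[Y] (assume σ̃ > 0), and let X̃ ~ N(μ̃, σ̃²). Then W₁(ρ_Y, ρ_X̃) ≤ σ̃·φ(μ̃/σ̃) − μ̃·Φ(−μ̃/σ̃) + |μ − μ̃| + |σ − σ̃|. -/

import Mathlib

open MeasureTheory ProbabilityTheory Real

/-- The probability density function `φ` of the standard normal distribution. -/
noncomputable def stdGaussianPDF (x : ℝ) : ℝ :=
  (Real.sqrt (2 * Real.pi))⁻¹ * Real.exp (-(x ^ 2) / 2)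

/-- The cumulative distribution function `Φ` of the standard normal distribution. -/
noncomputable def stdGaussianCDF (x : ℝ) : ℝ :=
  cdf (gaussianReal 0 1) x

/-- The 1-Wasserstein distance between two probability measures on `ℝ` (with finite first
moments), expressed through their cumulative distribution functions:
`W₁(ρ₁, ρ₂) = ∫_ℝ |F₁(u) − F₂(u)| du`. -/
noncomputable def W1cdf (ρ₁ ρ₂ : Measure ℝ) : ℝ :=
  ∫ u, |cdf ρ₁ u - cdf ρ₂ u|


open Set Filter Topology

lemma sg_pdf_eq : gaussianPDFReal 0 1 = stdGaussianPDF := by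
  ext x
  simp [gaussianPDFReal, stdGaussianPDF]

lemma sg_pdf_nonneg (x : ℝ) : 0 ≤ stdGaussianPDF x := by
  rw [← sg_pdf_eq]; exact gaussianPDFReal_nonneg 0 1 x

lemma sg_pdf_cont : Continuous stdGaussianPDF := by
  unfold stdGaussianPDF
  continuity

lemma sg_pdf_integrable : Integrable stdGaussianPDF := by
  rw [← sg_pdf_eq]; exact integrable_gaussianPDFReal 0 1

lemma sg_pdf_integral : ∫ x, stdGaussianPDF x = 1 := by
  rw [← sg_pdf_eq]; exact integral_gaussianPDFReal_eq_one 0 one_ne_zero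

lemma sg_cdf_eq_int (x : ℝ) : stdGaussianCDF x = ∫ t in Iic x, stdGaussianPDF t := by
  rw [stdGaussianCDF, cdf_eq_real, measureReal_def, gaussianReal_of_var_ne_zero 0 one_ne_zero,
    withDensity_apply _ measurableSet_Iic]
  simp only [gaussianPDF, sg_pdf_eq]
  rw [← ofReal_integral_eq_lintegral_ofReal (sg_pdf_integrable.integrableOn)
    (ae_of_all _ (fun t => sg_pdf_nonneg t)), ENNReal.toReal_ofReal
    (integral_nonneg fun t => sg_pdf_nonneg t)]

lemma sg_pdf_even (x : ℝ) : stdGaussianPDF (-x) = stdGaussianPDF x := by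
  simp [stdGaussianPDF]

lemma sg_cdf_nonneg (x : ℝ) : 0 ≤ stdGaussianCDF x := cdf_nonneg _ x

lemma sg_cdf_le_one (x : ℝ) : stdGaussianCDF x ≤ 1 := cdf_le_one _ x

lemma sg_cdf_mono : Monotone stdGaussianCDF := monotone_cdf _

lemma sg_cdf_neg (x : ℝ) : stdGaussianCDF (-x) = 1 - stdGaussianCDF x := by
  have h1 : ∫ t in Iic (-x), stdGaussianPDF t = ∫ t in Ioi x, stdGaussianPDF t := by
    rw [← integral_comp_neg_Ioi]
    simp_rw [sg_pdf_even]
  have h2 : (∫ t in Iic x, stdGaussianPDF t) + ∫ t in Ioi x, stdGaussianPDF t = 1 := by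
    rw [← Set.compl_Iic, integral_add_compl measurableSet_Iic sg_pdf_integrable, sg_pdf_integral]
  rw [sg_cdf_eq_int, sg_cdf_eq_int, h1]
  linarith

lemma sg_cdf_atBot : Tendsto stdGaussianCDF atBot (𝓝 0) := tendsto_cdf_atBot _

lemma sg_cdf_atTop : Tendsto stdGaussianCDF atTop (𝓝 1) := tendsto_cdf_atTop _

lemma sg_pdf_hasDeriv (x : ℝ) : HasDerivAt stdGaussianPDF (-(x * stdGaussianPDF x)) x := by
  have h : HasDerivAt (fun x : ℝ => -(x ^ 2) / 2) (-x) x := by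
    have := ((hasDerivAt_pow 2 x).neg).div_const 2
    simpa using this.congr_deriv (by ring)
  have := (h.exp).const_mul (Real.sqrt (2 * Real.pi))⁻¹
  unfold stdGaussianPDF
  refine this.congr_deriv ?_
  ring

lemma aux_sq_atBot : Tendsto (fun x : ℝ => -(x ^ 2) / 2) atBot atBot := by
  apply Tendsto.atBot_div_const two_pos
  apply tendsto_neg_atTop_atBot.comp
  have := (tendsto_pow_atTop (n := 2) two_ne_zero).comp (tendsto_neg_atBot_atTop (G := ℝ))
  have h2 : ((fun x : ℝ => x ^ 2) ∘ Neg.neg) = fun x : ℝ => x ^ 2 := by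
    ext y; simp [Function.comp]
  rwa [h2] at this

lemma aux_sq_atTop : Tendsto (fun x : ℝ => -(x ^ 2) / 2) atTop atBot := by
  apply Tendsto.atBot_div_const two_pos
  apply tendsto_neg_atTop_atBot.comp
  exact tendsto_pow_atTop two_ne_zero

lemma sg_pdf_tendsto_atBot : Tendsto stdGaussianPDF atBot (𝓝 0) := by
  unfold stdGaussianPDF
  rw [show (0:ℝ) = (Real.sqrt (2 * Real.pi))⁻¹ * 0 by ring]
  exact (Real.tendsto_exp_atBot.comp aux_sq_atBot).const_mul _

lemma sg_pdf_tendsto_atTop : Tendsto stdGaussianPDF atTop (𝓝 0) := by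
  unfold stdGaussianPDF
  rw [show (0:ℝ) = (Real.sqrt (2 * Real.pi))⁻¹ * 0 by ring]
  exact (Real.tendsto_exp_atBot.comp aux_sq_atTop).const_mul _

lemma sg_mul_pdf_integrable : Integrable (fun t : ℝ => t * stdGaussianPDF t) := by
  have h := (integrable_mul_exp_neg_mul_sq (b := 1/2) (by norm_num)).const_mul
    (Real.sqrt (2 * Real.pi))⁻¹
  refine h.congr ?_
  refine ae_of_all _ fun t => ?_
  unfold stdGaussianPDF
  ring_nf

lemma sg_int_Iic_mul_pdf (x : ℝ) :
    ∫ t in Iic x, t * stdGaussianPDF t = -stdGaussianPDF x := by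
  have h := integral_Iic_of_hasDerivAt_of_tendsto' (a := x)
    (f := fun t => -stdGaussianPDF t) (f' := fun t => t * stdGaussianPDF t)
    (m := 0) (fun t _ => by have := (sg_pdf_hasDeriv t).neg; rw [neg_neg] at this; exact this)
    sg_mul_pdf_integrable.integrableOn (by simpa using sg_pdf_tendsto_atBot.neg)
  simpa using h

lemma sg_mills (x : ℝ) (hx : x < 0) : stdGaussianCDF x ≤ stdGaussianPDF x / (-x) := by
  have hle : ∀ t ∈ Iic x, stdGaussianPDF t ≤ (t / x) * stdGaussianPDF t := by
    intro t ht
    have h1 : (1 : ℝ) ≤ t / x := by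
      rw [le_div_iff_of_neg hx]
      simpa using ht
    nlinarith [sg_pdf_nonneg t]
  have hint : IntegrableOn (fun t => (t / x) * stdGaussianPDF t) (Iic x) := by
    have := (sg_mul_pdf_integrable.const_mul x⁻¹).integrableOn (s := Iic x)
    refine this.congr_fun (fun t _ => by ring) measurableSet_Iic
  calc stdGaussianCDF x = ∫ t in Iic x, stdGaussianPDF t := sg_cdf_eq_int x
    _ ≤ ∫ t in Iic x, (t / x) * stdGaussianPDF t := by
        refine setIntegral_mono_on sg_pdf_integrable.integrableOn hint measurableSet_Iic hle
    _ = x⁻¹ * ∫ t in Iic x, t * stdGaussianPDF t := by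
        rw [← integral_const_mul]
        congr 1; ext t; ring
    _ = stdGaussianPDF x / (-x) := by
        rw [sg_int_Iic_mul_pdf]
        rw [div_neg, mul_neg, inv_mul_eq_div]

lemma sg_mul_cdf_atBot : Tendsto (fun x => x * stdGaussianCDF x) atBot (𝓝 0) := by
  refine squeeze_zero_norm' ?_ sg_pdf_tendsto_atBot
  filter_upwards [Iio_mem_atBot 0] with x hx
  rw [mem_Iio] at hx
  have h1 := sg_mills x hx
  have h2 := sg_cdf_nonneg x
  rw [Real.norm_eq_abs, abs_mul, abs_of_neg hx, abs_of_nonneg h2]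
  rw [div_eq_mul_inv] at h1
  have hx' : (0:ℝ) < -x := by linarith
  calc -x * stdGaussianCDF x ≤ -x * (stdGaussianPDF x * (-x)⁻¹) := by
        exact mul_le_mul_of_nonneg_left h1 (le_of_lt hx')
    _ = stdGaussianPDF x := by
        have : x ≠ 0 := ne_of_lt hx
        field_simp

lemma sg_cdf_hasDeriv (x : ℝ) : HasDerivAt stdGaussianCDF (stdGaussianPDF x) x := by
  have key : stdGaussianCDF = fun u =>
      (∫ t in Iic 0, stdGaussianPDF t) + ∫ t in (0:ℝ)..u, stdGaussianPDF t := by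
    ext u
    rw [sg_cdf_eq_int,
      ← intervalIntegral.integral_Iic_sub_Iic sg_pdf_integrable.integrableOn
        sg_pdf_integrable.integrableOn]
    ring
  rw [key]
  exact (intervalIntegral.integral_hasDerivAt_right
    (sg_pdf_integrable.intervalIntegrable)
    (sg_pdf_cont.stronglyMeasurableAtFilter _ _)
    sg_pdf_cont.continuousAt).const_add _

noncomputable def sgG (m s : ℝ) (u : ℝ) : ℝ :=
  s * stdGaussianPDF ((u - m) / s) + (u - m) * stdGaussianCDF ((u - m) / s)

lemma sgG_hasDeriv (m s : ℝ) (hs : 0 < s) (u : ℝ) :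
    HasDerivAt (sgG m s) (stdGaussianCDF ((u - m) / s)) u := by
  have hs' : s ≠ 0 := ne_of_gt hs
  have hin : HasDerivAt (fun u : ℝ => (u - m) / s) (1 / s) u := by
    simpa using ((hasDerivAt_id u).sub_const m).div_const s
  set y := (u - m) / s with hy
  have hφ : HasDerivAt (fun u : ℝ => stdGaussianPDF ((u - m) / s))
      (-(y * stdGaussianPDF y) * (1 / s)) u := by have := (sg_pdf_hasDeriv y).comp u hin; exact this
  have hΦ : HasDerivAt (fun u : ℝ => stdGaussianCDF ((u - m) / s))
      (stdGaussianPDF y * (1 / s)) u := (sg_cdf_hasDeriv y).comp u hin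
  have h2 : HasDerivAt (fun u : ℝ => (u - m) * stdGaussianCDF ((u - m) / s))
      (1 * stdGaussianCDF y + (u - m) * (stdGaussianPDF y * (1 / s))) u :=
    ((hasDerivAt_id u).sub_const m).mul hΦ
  have := (hφ.const_mul s).add h2
  have hym : y * s = u - m := by rw [hy]; field_simp
  refine this.congr_deriv ?_
  rw [← hym]
  field_simp
  ring

lemma sgG_tendsto (m s : ℝ) (hs : 0 < s) : Tendsto (sgG m s) atBot (𝓝 0) := by
  have hs' : s ≠ 0 := ne_of_gt hs
  have hin : Tendsto (fun u : ℝ => (u - m) / s) atBot atBot := by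
    apply Tendsto.atBot_div_const hs
    simpa [sub_eq_add_neg] using tendsto_atBot_add_const_right atBot (-m) tendsto_id
  have h1 : Tendsto (fun u : ℝ => s * (stdGaussianPDF ((u - m) / s)
      + ((u - m) / s) * stdGaussianCDF ((u - m) / s))) atBot (𝓝 (s * (0 + 0))) := by
    exact (((sg_pdf_tendsto_atBot.comp hin)).add (sg_mul_cdf_atBot.comp hin)).const_mul s
  rw [show s * ((0:ℝ) + 0) = 0 by ring] at h1
  refine h1.congr fun u => ?_
  unfold sgG
  field_simp

lemma sg_cdf_integrableOn_Iic (m s : ℝ) (hs : 0 < s) (c : ℝ) :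
    IntegrableOn (fun u => stdGaussianCDF ((u - m) / s)) (Iic c) := by
  have hderiv : ∀ v ∈ Ici (-c), HasDerivAt (fun v : ℝ => -sgG m s (-v))
      (stdGaussianCDF ((-v - m) / s)) v := by
    intro v _
    have h1 := ((sgG_hasDeriv m s hs (-v)).comp v (hasDerivAt_neg v)).neg
    simp [Function.comp_def] at h1
    exact h1
  have h2 : IntegrableOn (fun v => stdGaussianCDF ((-v - m) / s)) (Ioi (-c)) := by
    have hg : Tendsto (fun v : ℝ => -sgG m s (-v)) atTop (𝓝 0) := by
      have := (sgG_tendsto m s hs).comp tendsto_neg_atTop_atBot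
      simpa using this.neg
    exact integrableOn_Ioi_deriv_of_nonneg' hderiv (fun x _ => sg_cdf_nonneg _) hg
  have h3 : IntegrableOn (fun v => stdGaussianCDF ((-v - m) / s)) (Ici (-c)) := by
    rwa [integrableOn_Ici_iff_integrableOn_Ioi]
  have h4 := (MeasurePreserving.integrableOn_comp_preimage
    (Measure.measurePreserving_neg (volume : Measure ℝ))
    (Homeomorph.neg ℝ).measurableEmbedding).2 h3
  have h5 : (fun x : ℝ => -x) ⁻¹' (Ici (-c)) = Iic c := by
    ext x; simp
  refine (h4.mono_set (by rw [h5])).congr_fun (fun u _ => by simp) measurableSet_Iic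

lemma sg_J (m s : ℝ) (hs : 0 < s) (c : ℝ) :
    ∫ u in Iic c, stdGaussianCDF ((u - m) / s) = sgG m s c := by
  have := integral_Iic_of_hasDerivAt_of_tendsto' (a := c)
    (f := sgG m s) (f' := fun u => stdGaussianCDF ((u - m) / s)) (m := 0)
    (fun x _ => sgG_hasDeriv m s hs x) (sg_cdf_integrableOn_Iic m s hs c)
    (sgG_tendsto m s hs)
  simpa using this

lemma sgG_zero (m s : ℝ) (hs : 0 < s) :
    sgG m s 0 = s * stdGaussianPDF (m / s) - m * stdGaussianCDF (-(m / s)) := by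
  unfold sgG
  rw [show (0 - m) / s = -(m / s) by ring, sg_pdf_even]
  ring

lemma sg_J0 (m s : ℝ) (hs : 0 < s) :
    ∫ u in Iic (0:ℝ), stdGaussianCDF ((u - m) / s)
      = s * stdGaussianPDF (m / s) - m * stdGaussianCDF (-(m / s)) := by
  rw [sg_J m s hs 0, sgG_zero m s hs]

lemma sg_cdf_integrableOn_Ioi (m s : ℝ) (hs : 0 < s) :
    IntegrableOn (fun u => stdGaussianCDF ((m - u) / s)) (Ioi (0:ℝ)) := by
  have h3 : IntegrableOn (fun v => stdGaussianCDF ((v - (-m)) / s)) (Iic (0:ℝ)) :=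
    sg_cdf_integrableOn_Iic (-m) s hs 0
  have h4 := (MeasurePreserving.integrableOn_comp_preimage
    (Measure.measurePreserving_neg (volume : Measure ℝ))
    (Homeomorph.neg ℝ).measurableEmbedding).2 h3
  have h5 : (fun x : ℝ => -x) ⁻¹' (Iic 0) = Ici 0 := by ext x; simp
  have h6 := h4.mono_set (le_of_eq h5.symm)
  rw [integrableOn_Ici_iff_integrableOn_Ioi] at h6
  refine h6.congr_fun (fun u _ => ?_) measurableSet_Ioi
  simp only [Function.comp]
  congr 1
  ring

lemma sg_K0 (m s : ℝ) (hs : 0 < s) :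
    ∫ u in Ioi (0:ℝ), stdGaussianCDF ((m - u) / s)
      = s * stdGaussianPDF (m / s) + m * stdGaussianCDF (m / s) := by
  have h1 : ∫ u in Ioi (0:ℝ), stdGaussianCDF ((m - u) / s)
      = ∫ u in Iic (-(0:ℝ)), stdGaussianCDF ((u - (-m)) / s) := by
    rw [← integral_comp_neg_Ioi]
    congr 1; ext u; congr 1; ring
  rw [h1]
  rw [neg_zero, sg_J0 (-m) s hs, show -m / s = -(m / s) by ring, sg_pdf_even, neg_neg]
  ring

lemma sg_split_integrable {f : ℝ → ℝ} (h1 : IntegrableOn f (Iic 0))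
    (h2 : IntegrableOn f (Ioi 0)) : Integrable f := by
  rw [← integrableOn_univ, ← Iic_union_Ioi (a := (0:ℝ))]
  exact h1.union h2

lemma sg_split_integral {f : ℝ → ℝ} (hf : Integrable f) :
    ∫ u, f u = (∫ u in Iic (0:ℝ), f u) + ∫ u in Ioi (0:ℝ), f u := by
  rw [← Set.compl_Iic]
  exact (integral_add_compl measurableSet_Iic hf).symm

lemma sg_refl_eq (a b s u : ℝ) :
    stdGaussianCDF ((u - a) / s) - stdGaussianCDF ((u - b) / s)
      = stdGaussianCDF ((b - u) / s) - stdGaussianCDF ((a - u) / s) := by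
  have h1 : stdGaussianCDF ((a - u) / s) = 1 - stdGaussianCDF ((u - a) / s) := by
    rw [show (a - u) / s = -((u - a) / s) by ring, sg_cdf_neg]
  have h2 : stdGaussianCDF ((b - u) / s) = 1 - stdGaussianCDF ((u - b) / s) := by
    rw [show (b - u) / s = -((u - b) / s) by ring, sg_cdf_neg]
  rw [h1, h2]; ring

lemma sg_I1 (a b s : ℝ) (hs : 0 < s) :
    Integrable (fun u => stdGaussianCDF ((u - a) / s) - stdGaussianCDF ((u - b) / s))
    ∧ ∫ u, (stdGaussianCDF ((u - a) / s) - stdGaussianCDF ((u - b) / s)) = b - a := by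
  set D := fun u => stdGaussianCDF ((u - a) / s) - stdGaussianCDF ((u - b) / s) with hD
  have hIic : IntegrableOn D (Iic 0) :=
    (sg_cdf_integrableOn_Iic a s hs 0).sub (sg_cdf_integrableOn_Iic b s hs 0)
  have hIoi : IntegrableOn D (Ioi 0) := by
    have base : IntegrableOn
        (fun u => stdGaussianCDF ((b - u) / s) - stdGaussianCDF ((a - u) / s)) (Ioi 0) :=
      (sg_cdf_integrableOn_Ioi b s hs).sub (sg_cdf_integrableOn_Ioi a s hs)
    exact base.congr_fun (fun u _ => (sg_refl_eq a b s u).symm) measurableSet_Ioi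
  have hInt : Integrable D := sg_split_integrable hIic hIoi
  refine ⟨hInt, ?_⟩
  have e1 : ∫ u in Iic (0:ℝ), D u = sgG a s 0 - sgG b s 0 := by
    rw [hD, integral_sub (sg_cdf_integrableOn_Iic a s hs 0) (sg_cdf_integrableOn_Iic b s hs 0),
      sg_J a s hs 0, sg_J b s hs 0]
  have e2 : ∫ u in Ioi (0:ℝ), D u
      = (∫ u in Ioi (0:ℝ), stdGaussianCDF ((b - u) / s))
        - ∫ u in Ioi (0:ℝ), stdGaussianCDF ((a - u) / s) := by
    rw [← integral_sub (sg_cdf_integrableOn_Ioi b s hs) (sg_cdf_integrableOn_Ioi a s hs)]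
    exact setIntegral_congr_fun measurableSet_Ioi (fun u _ => sg_refl_eq a b s u)
  rw [sg_split_integral hInt, e1, e2, sg_K0 a s hs, sg_K0 b s hs,
    sgG_zero a s hs, sgG_zero b s hs]
  have ha : a * stdGaussianCDF (-(a / s)) = a - a * stdGaussianCDF (a / s) := by
    rw [sg_cdf_neg]; ring
  have hb : b * stdGaussianCDF (-(b / s)) = b - b * stdGaussianCDF (b / s) := by
    rw [sg_cdf_neg]; ring
  linarith [ha, hb]

lemma sg_I2 (s t : ℝ) (hs : 0 < s) (hst : s ≤ t) :
    Integrable (fun u => |stdGaussianCDF (u / s) - stdGaussianCDF (u / t)|)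
    ∧ ∫ u, |stdGaussianCDF (u / s) - stdGaussianCDF (u / t)|
        = (t - s) * (2 * stdGaussianPDF 0) := by
  have ht : 0 < t := lt_of_lt_of_le hs hst
  have hIic0 : ∀ u : ℝ, u ≤ 0 → |stdGaussianCDF (u / s) - stdGaussianCDF (u / t)|
      = stdGaussianCDF ((u - 0) / t) - stdGaussianCDF ((u - 0) / s) := by
    intro u hu
    have hd : u / s ≤ u / t := by
      rw [div_le_div_iff₀ hs ht]
      nlinarith
    rw [abs_of_nonpos (by simpa using sub_nonpos.2 (sg_cdf_mono hd))]
    simp only [sub_zero]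
    ring
  have hIoi0 : ∀ u : ℝ, 0 ≤ u → |stdGaussianCDF (u / s) - stdGaussianCDF (u / t)|
      = stdGaussianCDF ((0 - u) / t) - stdGaussianCDF ((0 - u) / s) := by
    intro u hu
    have hd : u / t ≤ u / s := by
      rw [div_le_div_iff₀ ht hs]
      nlinarith
    rw [abs_of_nonneg (by simpa using sub_nonneg.2 (sg_cdf_mono hd))]
    have e1 : stdGaussianCDF ((0 - u) / t) = 1 - stdGaussianCDF (u / t) := by
      rw [show (0 - u) / t = -(u / t) by ring, sg_cdf_neg]
    have e2 : stdGaussianCDF ((0 - u) / s) = 1 - stdGaussianCDF (u / s) := by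
      rw [show (0 - u) / s = -(u / s) by ring, sg_cdf_neg]
    rw [e1, e2]; ring
  set E := fun u => |stdGaussianCDF (u / s) - stdGaussianCDF (u / t)| with hE
  have hIic : IntegrableOn E (Iic 0) := by
    have base : IntegrableOn
        (fun u => stdGaussianCDF ((u - 0) / t) - stdGaussianCDF ((u - 0) / s)) (Iic 0) :=
      (sg_cdf_integrableOn_Iic 0 t ht 0).sub (sg_cdf_integrableOn_Iic 0 s hs 0)
    exact base.congr_fun (fun u hu => (hIic0 u hu).symm) measurableSet_Iic
  have hIoi : IntegrableOn E (Ioi 0) := by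
    have base : IntegrableOn
        (fun u => stdGaussianCDF ((0 - u) / t) - stdGaussianCDF ((0 - u) / s)) (Ioi 0) :=
      (sg_cdf_integrableOn_Ioi 0 t ht).sub (sg_cdf_integrableOn_Ioi 0 s hs)
    exact base.congr_fun (fun u hu => (hIoi0 u (le_of_lt hu)).symm) measurableSet_Ioi
  have hInt : Integrable E := sg_split_integrable hIic hIoi
  refine ⟨hInt, ?_⟩
  have e1 : ∫ u in Iic (0:ℝ), E u = sgG 0 t 0 - sgG 0 s 0 := by
    rw [setIntegral_congr_fun measurableSet_Iic (fun u hu => hIic0 u hu),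
      integral_sub (sg_cdf_integrableOn_Iic 0 t ht 0) (sg_cdf_integrableOn_Iic 0 s hs 0),
      sg_J 0 t ht 0, sg_J 0 s hs 0]
  have e2 : ∫ u in Ioi (0:ℝ), E u
      = (t * stdGaussianPDF 0 + 0) - (s * stdGaussianPDF 0 + 0) := by
    rw [setIntegral_congr_fun measurableSet_Ioi (fun u hu => hIoi0 u (le_of_lt hu)),
      integral_sub (sg_cdf_integrableOn_Ioi 0 t ht) (sg_cdf_integrableOn_Ioi 0 s hs)]
    have k1 := sg_K0 0 t ht
    have k2 := sg_K0 0 s hs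
    simp only [zero_div, zero_mul] at k1 k2
    rw [k1, k2]
  rw [sg_split_integral hInt, e1, e2, sgG_zero 0 t ht, sgG_zero 0 s hs]
  simp only [zero_div, zero_mul, neg_zero]
  ring

lemma gauss_eq_map (m s : ℝ) (hs : 0 < s) :
    gaussianReal m ⟨s ^ 2, sq_nonneg s⟩
      = (gaussianReal 0 1).map (fun x => s * x + m) := by
  have h1 : (gaussianReal 0 1).map (fun x => s * x) = gaussianReal 0 ⟨s ^ 2, sq_nonneg s⟩ := by
    have := gaussianReal_map_const_mul (μ := 0) (v := 1) s
    simp only [mul_zero] at this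
    convert this using 2
    ext
    simp
    rfl
  have h2 : ((gaussianReal 0 ⟨s ^ 2, sq_nonneg s⟩).map (fun x => x + m))
      = gaussianReal m ⟨s ^ 2, sq_nonneg s⟩ := by
    have := gaussianReal_map_add_const (μ := 0) (v := ⟨s ^ 2, sq_nonneg s⟩) m
    simpa using this
  rw [← h2, ← h1, Measure.map_map (measurable_id'.add_const m) (measurable_const_mul s)]
  rfl

lemma cdf_gauss (m s : ℝ) (hs : 0 < s) (u : ℝ) :
    cdf (gaussianReal m ⟨s ^ 2, sq_nonneg s⟩) u = stdGaussianCDF ((u - m) / s) := by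
  have hmeas : Measurable (fun x : ℝ => s * x + m) :=
    (measurable_const_mul s).add_const m
  haveI : IsProbabilityMeasure ((gaussianReal 0 1).map (fun x : ℝ => s * x + m)) :=
    Measure.isProbabilityMeasure_map hmeas.aemeasurable
  rw [gauss_eq_map m s hs, cdf_eq_real, measureReal_def, Measure.map_apply hmeas measurableSet_Iic]
  have hset : (fun x : ℝ => s * x + m) ⁻¹' (Iic u) = Iic ((u - m) / s) := by
    ext x
    simp only [mem_preimage, mem_Iic]
    rw [le_div_iff₀ hs]
    constructor <;> intro h <;> nlinarith
  rw [hset, stdGaussianCDF, cdf_eq_real, measureReal_def]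

lemma cdf_relu_gauss (m s : ℝ) (hs : 0 < s) (u : ℝ) :
    cdf ((gaussianReal m ⟨s ^ 2, sq_nonneg s⟩).map (fun x => max 0 x)) u
      = if u < 0 then 0 else stdGaussianCDF ((u - m) / s) := by
  have hmeas : Measurable (fun x : ℝ => max 0 x) := measurable_const.max measurable_id
  haveI : IsProbabilityMeasure (gaussianReal m ⟨s ^ 2, sq_nonneg s⟩) :=
    instIsProbabilityMeasureGaussianReal m _
  haveI : IsProbabilityMeasure ((gaussianReal m ⟨s ^ 2, sq_nonneg s⟩).map (fun x => max 0 x)) :=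
    Measure.isProbabilityMeasure_map hmeas.aemeasurable
  rw [cdf_eq_real, measureReal_def, Measure.map_apply hmeas measurableSet_Iic]
  by_cases hu : u < 0
  · have hset : (fun x : ℝ => max 0 x) ⁻¹' (Iic u) = ∅ := by
      ext x
      simp only [mem_preimage, mem_Iic, mem_empty_iff_false, iff_false, not_le]
      exact lt_of_lt_of_le hu (le_max_left 0 x)
    rw [hset]
    simp [hu]
  · have hset : (fun x : ℝ => max 0 x) ⁻¹' (Iic u) = Iic u := by
      ext x
      simp only [mem_preimage, mem_Iic, max_le_iff]
      push_neg at hu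
      exact ⟨fun h => h.2, fun h => ⟨hu, h⟩⟩
    rw [hset, if_neg hu, ← measureReal_def, ← cdf_eq_real, cdf_gauss m s hs u]

lemma sg_two_pdf0 : 2 * stdGaussianPDF 0 ≤ 1 := by
  have hπ : (4:ℝ) ≤ 2 * Real.pi := by nlinarith [Real.pi_gt_three]
  have h2 : (2:ℝ) ≤ Real.sqrt (2 * Real.pi) := by
    have h4 : Real.sqrt 4 ≤ Real.sqrt (2 * Real.pi) := Real.sqrt_le_sqrt hπ
    rwa [show (4:ℝ) = 2 ^ 2 by norm_num, Real.sqrt_sq (by norm_num)] at h4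
  have hpos : (0:ℝ) < Real.sqrt (2 * Real.pi) := lt_of_lt_of_le (by norm_num) h2
  unfold stdGaussianPDF
  rw [show -((0:ℝ) ^ 2) / 2 = 0 by norm_num, Real.exp_zero, mul_one]
  calc 2 * (Real.sqrt (2 * Real.pi))⁻¹ ≤ Real.sqrt (2 * Real.pi) * (Real.sqrt (2 * Real.pi))⁻¹ :=
        mul_le_mul_of_nonneg_right h2 (by positivity)
    _ = 1 := mul_inv_cancel₀ (ne_of_gt hpos)

lemma sg_I1abs (a b s : ℝ) (hs : 0 < s) :
    Integrable (fun u => |stdGaussianCDF ((u - a) / s) - stdGaussianCDF ((u - b) / s)|)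
    ∧ ∫ u, |stdGaussianCDF ((u - a) / s) - stdGaussianCDF ((u - b) / s)| = |b - a| := by
  rcases le_total a b with hab | hab
  · have hpt : ∀ u : ℝ, |stdGaussianCDF ((u - a) / s) - stdGaussianCDF ((u - b) / s)|
        = stdGaussianCDF ((u - a) / s) - stdGaussianCDF ((u - b) / s) := by
      intro u
      refine abs_of_nonneg (sub_nonneg.2 (sg_cdf_mono ?_))
      gcongr
    constructor
    · exact (sg_I1 a b s hs).1.abs
    · calc ∫ u, |stdGaussianCDF ((u - a) / s) - stdGaussianCDF ((u - b) / s)|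
          = ∫ u, (stdGaussianCDF ((u - a) / s) - stdGaussianCDF ((u - b) / s)) := by
            congr 1; ext u; exact hpt u
        _ = b - a := (sg_I1 a b s hs).2
        _ = |b - a| := (abs_of_nonneg (by linarith)).symm
  · have hpt : ∀ u : ℝ, |stdGaussianCDF ((u - a) / s) - stdGaussianCDF ((u - b) / s)|
        = stdGaussianCDF ((u - b) / s) - stdGaussianCDF ((u - a) / s) := by
      intro u
      rw [abs_sub_comm]
      refine abs_of_nonneg (sub_nonneg.2 (sg_cdf_mono ?_))
      gcongr
    constructor
    · refine (sg_I1 b a s hs).1.abs.congr (ae_of_all _ fun u => ?_)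
      simp only [abs_sub_comm]
    · calc ∫ u, |stdGaussianCDF ((u - a) / s) - stdGaussianCDF ((u - b) / s)|
          = ∫ u, (stdGaussianCDF ((u - b) / s) - stdGaussianCDF ((u - a) / s)) := by
            congr 1; ext u; exact hpt u
        _ = a - b := (sg_I1 b a s hs).2
        _ = |b - a| := by rw [abs_sub_comm, abs_of_nonneg (by linarith)]

lemma sg_I2abs (s t : ℝ) (hs : 0 < s) (ht : 0 < t) :
    Integrable (fun u => |stdGaussianCDF (u / s) - stdGaussianCDF (u / t)|)
    ∧ ∫ u, |stdGaussianCDF (u / s) - stdGaussianCDF (u / t)| ≤ |s - t| := by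
  rcases le_total s t with hst | hst
  · refine ⟨(sg_I2 s t hs hst).1, ?_⟩
    rw [(sg_I2 s t hs hst).2, abs_sub_comm, abs_of_nonneg (by linarith)]
    nlinarith [sg_two_pdf0, sg_pdf_nonneg 0]
  · have hcomm : (fun u : ℝ => |stdGaussianCDF (u / s) - stdGaussianCDF (u / t)|)
        = fun u => |stdGaussianCDF (u / t) - stdGaussianCDF (u / s)| := by
      ext u; rw [abs_sub_comm]
    rw [hcomm]
    refine ⟨(sg_I2 t s ht hst).1, ?_⟩
    rw [(sg_I2 t s ht hst).2, abs_of_nonneg (by linarith)]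
    nlinarith [sg_two_pdf0, sg_pdf_nonneg 0]

/-- For `X ~ N(μ, σ²)` with `σ > 0`, `Y = max(0, X)`, `μ̃ = E[Y]`, `σ̃² = Var[Y]` with
`σ̃ > 0`, and `X̃ ~ N(μ̃, σ̃²)`,
`W₁(ρ_Y, ρ_X̃) ≤ σ̃·φ(μ̃/σ̃) − μ̃·Φ(−μ̃/σ̃) + |μ − μ̃| + |σ − σ̃|`. -/
theorem relu_gaussian_moment_matching_W1_bound (μ σ : ℝ) (hσ : 0 < σ)
    (μt σt : ℝ) (hσt : 0 < σt)
    (hμt : μt = ∫ x, max 0 x ∂(gaussianReal μ ⟨σ ^ 2, sq_nonneg σ⟩))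
    (hσt2 : σt ^ 2 = variance (fun x => max 0 x) (gaussianReal μ ⟨σ ^ 2, sq_nonneg σ⟩)) :
    W1cdf ((gaussianReal μ ⟨σ ^ 2, sq_nonneg σ⟩).map (fun x => max 0 x))
        (gaussianReal μt ⟨σt ^ 2, sq_nonneg σt⟩) ≤
      σt * stdGaussianPDF (μt / σt) - μt * stdGaussianCDF (-(μt / σt))
        + |μ - μt| + |σ - σt| := by
  clear hμt hσt2
  set g1 : ℝ → ℝ := fun u => |stdGaussianCDF ((u - μ) / σ) - stdGaussianCDF ((u - μt) / σ)|
    with hg1def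
  set g2 : ℝ → ℝ := fun u => |stdGaussianCDF ((u - μt) / σ) - stdGaussianCDF ((u - μt) / σt)|
    with hg2def
  set g3 : ℝ → ℝ := fun u => if u < 0 then stdGaussianCDF ((u - μt) / σt) else 0 with hg3def
  -- g1
  have hg1 := sg_I1abs μ μt σ hσ
  -- g2 : via shift by μt
  have hE := sg_I2abs σ σt hσ hσt
  have hg2int : Integrable g2 := by
    have := hE.1.comp_sub_right μt
    exact this
  have hg2val : ∫ u, g2 u ≤ |σ - σt| := by
    have hshift : ∫ u, g2 u
        = ∫ u, |stdGaussianCDF (u / σ) - stdGaussianCDF (u / σt)| := by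
      exact integral_sub_right_eq_self
        (fun u => |stdGaussianCDF (u / σ) - stdGaussianCDF (u / σt)|) μt
    rw [hshift]
    exact hE.2
  -- g3
  have hg3int : Integrable g3 := by
    have : g3 = Set.indicator (Iio 0) (fun u => stdGaussianCDF ((u - μt) / σt)) := by
      ext u
      rw [Set.indicator_apply, hg3def]
      simp [mem_Iio]
    rw [this, integrable_indicator_iff measurableSet_Iio]
    exact (sg_cdf_integrableOn_Iic μt σt hσt 0).mono_set Iio_subset_Iic_self
  have hg3val : ∫ u, g3 u
      = σt * stdGaussianPDF (μt / σt) - μt * stdGaussianCDF (-(μt / σt)) := by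
    have h1 : g3 = Set.indicator (Iio 0) (fun u => stdGaussianCDF ((u - μt) / σt)) := by
      ext u
      rw [Set.indicator_apply, hg3def]
      simp [mem_Iio]
    rw [h1, integral_indicator measurableSet_Iio, ← integral_Iic_eq_integral_Iio,
      sg_J0 μt σt hσt]
  -- pointwise bound
  have hpt : ∀ u, |cdf ((gaussianReal μ ⟨σ ^ 2, sq_nonneg σ⟩).map (fun x => max 0 x)) u
      - cdf (gaussianReal μt ⟨σt ^ 2, sq_nonneg σt⟩) u| ≤ g1 u + g2 u + g3 u := by
    intro u
    rw [cdf_relu_gauss μ σ hσ u, cdf_gauss μt σt hσt u]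
    by_cases hu : u < 0
    · rw [if_pos hu, hg3def]
      simp only [if_pos hu, zero_sub, abs_neg, abs_of_nonneg (sg_cdf_nonneg _)]
      have := abs_nonneg (stdGaussianCDF ((u - μ) / σ) - stdGaussianCDF ((u - μt) / σ))
      have := abs_nonneg (stdGaussianCDF ((u - μt) / σ) - stdGaussianCDF ((u - μt) / σt))
      rw [hg1def, hg2def]
      simp only []
      linarith
    · rw [if_neg hu, hg3def]
      simp only [if_neg hu, add_zero]
      exact abs_sub_le _ _ _
  -- conclude
  have hsum : Integrable (fun u => g1 u + g2 u + g3 u) := (hg1.1.add hg2int).add hg3int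
  have hW : W1cdf ((gaussianReal μ ⟨σ ^ 2, sq_nonneg σ⟩).map (fun x => max 0 x))
      (gaussianReal μt ⟨σt ^ 2, sq_nonneg σt⟩) ≤ ∫ u, (g1 u + g2 u + g3 u) := by
    refine integral_mono_of_nonneg (ae_of_all _ fun u => abs_nonneg _) hsum
      (ae_of_all _ fun u => hpt u)
  have hsplit : ∫ u, (g1 u + g2 u + g3 u) = (∫ u, g1 u) + (∫ u, g2 u) + ∫ u, g3 u := by
    have h12 : Integrable (fun u => g1 u + g2 u) := hg1.1.add hg2int
    rw [integral_add h12 hg3int, integral_add hg1.1 hg2int]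
  rw [hsplit] at hW
  have e1 : ∫ u, g1 u = |μ - μt| := by rw [hg1.2, abs_sub_comm]
  rw [e1, hg3val] at hW
  linarith
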